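/- For the periodic pilot pattern with parameters (n_p,m_p) and (n_p',m_p') both yielding the same pilot count |P| (i.e., (K+1)(L+1) = (K'+1)(L'+1)) where K n_p = K' n_p' = N−1 and L m_p = L' m_p' = M−1, if n_p > n_p' then K < K' and hence K(K+2)n_p² = (N−1)(N−1+2n_p) > (N−1)(N−1+2n_p') = K'(K'+2)n_p'², so CRB_ran is strictly smaller for the larger n_p. -/
import Mathlib


theorem crb_ran_pilot_comparison (N M : ℕ) (hN : 2 ≤ N) (hM : 2 ≤ M)
    (np np' mp mp' K K' L L' : ℕ)
    (hnp : 0 < np) (hnp' : 0 < np') (hmp : 0 < mp) (hmp' : 0 < mp')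
    (hKnp : K * np = N - 1) (hK'np' : K' * np' = N - 1)
    (hLmp : L * mp = M - 1) (hL'mp' : L' * mp' = M - 1)
    (hcard : (K + 1) * (L + 1) = (K' + 1) * (L' + 1))
    (Pcard : ℕ) (hP : Pcard = (K + 1) * (L + 1))
    (C : ℝ) (hC : 0 < C)
    (hgt : np' < np) :
    K < K' ∧
    (K' : ℝ) * (K' + 2) * (np' : ℝ) ^ 2 < (K : ℝ) * (K + 2) * (np : ℝ) ^ 2 ∧
    C / ((K : ℝ) * (K + 2) * (Pcard : ℝ) * (np : ℝ) ^ 2) <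
      C / ((K' : ℝ) * (K' + 2) * (Pcard : ℝ) * (np' : ℝ) ^ 2) := by
  have hN1 : 0 < N - 1 := by omega
  have hK0 : 0 < K := by
    rcases Nat.eq_zero_or_pos K with h | h
    · simp [h] at hKnp; omega
    · exact h
  have hKK' : K < K' := by
    have : K * np' < K' * np' := by
      calc K * np' < K * np := (Nat.mul_lt_mul_left hK0).mpr hgt
        _ = K' * np' := by omega
    exact Nat.lt_of_mul_lt_mul_right this
  have hmain : (K' : ℝ) * (K' + 2) * (np' : ℝ) ^ 2 < (K : ℝ) * (K + 2) * (np : ℝ) ^ 2 := by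
    have e1 : (K : ℝ) * (np : ℝ) = (N - 1 : ℕ) := by exact_mod_cast hKnp
    have e2 : (K' : ℝ) * (np' : ℝ) = (N - 1 : ℕ) := by exact_mod_cast hK'np'
    have h1 : (K : ℝ) * (K + 2) * (np : ℝ) ^ 2
        = ((N - 1 : ℕ) : ℝ) ^ 2 + 2 * (np : ℝ) * (N - 1 : ℕ) := by
      rw [← e1]; ring
    have h2 : (K' : ℝ) * (K' + 2) * (np' : ℝ) ^ 2
        = ((N - 1 : ℕ) : ℝ) ^ 2 + 2 * (np' : ℝ) * (N - 1 : ℕ) := by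
      rw [← e2]; ring
    rw [h1, h2]
    have : (np' : ℝ) < np := by exact_mod_cast hgt
    have hN1' : (0 : ℝ) < (N - 1 : ℕ) := by exact_mod_cast hN1
    nlinarith
  refine ⟨hKK', hmain, ?_⟩
  have hP0 : (0 : ℝ) < Pcard := by
    have : 0 < Pcard := by rw [hP]; positivity
    exact_mod_cast this
  have hK0R : (0 : ℝ) < K := by exact_mod_cast hK0
  have hK'0R : (0 : ℝ) < K' := by exact_mod_cast (lt_trans hK0 hKK')
  have hnp'R : (0 : ℝ) < np' := by exact_mod_cast hnp'
  have hdenlt : (K' : ℝ) * (K' + 2) * (Pcard : ℝ) * (np' : ℝ) ^ 2 <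
      (K : ℝ) * (K + 2) * (Pcard : ℝ) * (np : ℝ) ^ 2 := by
    have := mul_lt_mul_of_pos_right hmain hP0
    nlinarith [this]
  have hpos : (0 : ℝ) < (K' : ℝ) * (K' + 2) * (Pcard : ℝ) * (np' : ℝ) ^ 2 := by
    positivity
  exact div_lt_div_of_pos_left hC hpos hdenlt
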